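/- The maximum of nfc(F) over all minimally unsatisfiable clause-sets F with deficiency δ(F) = 7 equals 9 (i.e., nfc(F) ≤ 9 for all such F, and there exists such an F with nfc(F) = 9), while the maximum of nfc(F) over all unsatisfiable hitting clause-sets F with δ(F) = 7 equals 8. -/

import Mathlib

/-- A clause: a finite set of nonzero integers (literals) that is clash-free. -/
def IsClause (C : Finset ℤ) : Prop := (0 : ℤ) ∉ C ∧ ∀ x ∈ C, -x ∉ C

/-- A clause-set: a finite set of clauses. -/
def IsClauseSet (F : Finset (Finset ℤ)) : Prop := ∀ C ∈ F, IsClause C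

/-- The variables of a clause: the absolute values of its literals. -/
def clauseVar (C : Finset ℤ) : Finset ℕ := C.image Int.natAbs

/-- The variables of a clause-set. -/
def var (F : Finset (Finset ℤ)) : Finset ℕ := F.biUnion clauseVar

/-- The number of variables `n(F)`. -/
def numVar (F : Finset (Finset ℤ)) : ℕ := (var F).card

/-- The deficiency `δ(F) = c(F) - n(F)`. -/
def deficiency (F : Finset (Finset ℤ)) : ℤ := (F.card : ℤ) - (numVar F : ℤ)

/-- `F` is satisfiable iff some clause `C` intersects every clause of `F`. -/
def Satisfiable (F : Finset (Finset ℤ)) : Prop :=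
  ∃ C : Finset ℤ, IsClause C ∧ ∀ D ∈ F, (C ∩ D).Nonempty

/-- `F` is hitting iff any two distinct clauses of `F` clash. -/
def Hitting (F : Finset (Finset ℤ)) : Prop :=
  ∀ C ∈ F, ∀ D ∈ F, C ≠ D → ∃ x ∈ C, -x ∈ D

/-- `F` is minimally unsatisfiable. -/
def MinUnsat (F : Finset (Finset ℤ)) : Prop :=
  ¬ Satisfiable F ∧ ∀ G ⊂ F, Satisfiable G

/-- The number of full clauses of `F`. -/
def nfc (F : Finset (Finset ℤ)) : ℕ :=
  (F.filter (fun C => clauseVar C = var F)).card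

/-- The degree of a variable `v` in `F`. -/
def vdeg (F : Finset (Finset ℤ)) (v : ℕ) : ℕ :=
  (F.filter (fun C => v ∈ clauseVar C)).card

/-- The minimal variable-degree of `F` (for `n(F) > 0`). -/
noncomputable def minVarDeg (F : Finset (Finset ℤ)) : ℕ :=
  sInf {d : ℕ | ∃ v ∈ var F, vdeg F v = d}

/-!
Let `S` be the set of falsifying points of the `s = nfc F` full clauses: each full clause is
falsified at exactly one point of the Boolean cube on `var F`. Both for minimally unsatisfiable and
for unsatisfiable hitting clause-sets every clause has a private falsifying point, so no point of
`S` falsifies a non-full clause, while every point outside `S` does.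

Count the pairs `(p, v)` with `p ∈ S`. If flipping `v` keeps `p` inside `S`, the pair is an edge
of the cube inside `S`, and there are at most `edgeBound s` of these. Otherwise the flipped point
falsifies one of the `n + 7 - s` non-full clauses `D`, and `p` determines `v`, because `D` then has
exactly one true literal at `p`. Hence `s * n ≤ edgeBound s + (n + 7 - s) * s`, which forces
`s ≤ 10`. For `s = 10` all of this is tight; as `S` is then connected in the cube, each non-full
clause has a literal that is true on all of `S`. Since `10` is not a power of two, some point
outside `S` agrees with `S` on every coordinate constant on `S`, and it falsifies no clause.

For hitting clause-sets the falsifier sets of the clauses partition the cube, and a non-full clause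
has an even number of falsifiers, so `nfc F ≡ 2 ^ n ≡ 0 (mod 2)`.
-/

open Finset

section Hypercube

variable {α : Type*} [DecidableEq α]

def flipAt (v : α) (t : α → Bool) : α → Bool := Function.update t v (!t v)

@[simp]
lemma flipAt_apply_self (v : α) (t : α → Bool) : flipAt v t v = !t v :=
  Function.update_self v _ t

lemma flipAt_apply_of_ne {v w : α} (t : α → Bool) (h : w ≠ v) : flipAt v t w = t w :=
  Function.update_of_ne h _ t

@[simp]
lemma flipAt_flipAt (v : α) (t : α → Bool) : flipAt v (flipAt v t) = t := by
  funext w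
  by_cases h : w = v
  · subst h; simp
  · rw [flipAt_apply_of_ne _ h, flipAt_apply_of_ne _ h]

lemma flipAt_ne (v : α) (t : α → Bool) : flipAt v t ≠ t :=
  fun h => by simpa using congrFun h v

lemma two_mul_card_filter_apply_eq {M : Finset (α → Bool)} {v : α}
    (hM : ∀ p ∈ M, flipAt v p ∈ M) (b : Bool) : 2 * #{p ∈ M | p v = b} = #M := by
  have hflip : #{p ∈ M | p v = b} = #{p ∈ M | ¬ p v = b} := by
    refine card_nbij' (flipAt v) (flipAt v) ?_ ?_ (fun p _ => flipAt_flipAt v p)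
      (fun p _ => flipAt_flipAt v p) <;>
    · intro p hp
      rw [mem_coe, mem_filter] at hp ⊢
      rw [flipAt_apply_self]
      exact ⟨hM p hp.1, by cases b <;> simpa using hp.2⟩
  have := card_filter_add_card_filter_not (s := M) (fun p => p v = b)
  omega

variable [Fintype α]

def innerEdges (S : Finset (α → Bool)) : Finset ((α → Bool) × α) :=
  (S ×ˢ univ).filter fun e => flipAt e.2 e.1 ∈ S

@[simp]
lemma mem_innerEdges {S : Finset (α → Bool)} {e : (α → Bool) × α} :
    e ∈ innerEdges S ↔ e.1 ∈ S ∧ flipAt e.2 e.1 ∈ S := by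
  simp [innerEdges]

/-- For `s ≤ 10` this is twice the maximal number of edges of an `s`-vertex subgraph of a
hypercube. From `11` on it is `s² - 7s - 2`: still compatible with `edgeBound_add`, and just below
the `s² - 7s` that the counting argument for deficiency `7` would need. -/
def edgeBound : ℕ → ℕ
  | 0 => 0 | 1 => 0 | 2 => 2 | 3 => 4 | 4 => 8 | 5 => 10
  | 6 => 14 | 7 => 18 | 8 => 24 | 9 => 26 | 10 => 30
  | s + 11 => s * s + 15 * s + 42

lemma edgeBound_add (a b : ℕ) :
    edgeBound a + edgeBound b + 2 * min a b ≤ edgeBound (a + b) := by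
  wlog hab : a ≤ b generalizing a b
  · simpa [add_comm, min_comm] using this b a (by omega)
  rcases Nat.lt_or_ge b 11 with hb | hb
  · have key : ∀ b < 11, ∀ a ≤ b,
        edgeBound a + edgeBound b + 2 * min a b ≤ edgeBound (a + b) := by decide
    exact key b hb a hab
  obtain ⟨b, rfl⟩ := Nat.exists_eq_add_of_le' hb
  rw [min_eq_left hab, show a + (b + 11) = a + b + 11 by ring]
  rcases Nat.lt_or_ge a 11 with ha | ha
  · have : edgeBound a ≤ 3 * a := (by decide : ∀ a < 11, edgeBound a ≤ 3 * a) a ha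
    rw [show edgeBound (a + b + 11) = (a + b) * (a + b) + 15 * (a + b) + 42 from rfl,
      show edgeBound (b + 11) = b * b + 15 * b + 42 from rfl]
    nlinarith
  · obtain ⟨a, rfl⟩ := Nat.exists_eq_add_of_le' ha
    simp only [edgeBound]
    nlinarith

lemma innerEdges_subset (S : Finset (α → Bool)) (v : α) :
    innerEdges S ⊆ {p ∈ S | flipAt v p ∈ S}.image (·, v) ∪
      innerEdges {p ∈ S | p v = false} ∪ innerEdges {p ∈ S | p v = true} := by
  rintro ⟨p, w⟩ he
  rw [mem_innerEdges] at he
  by_cases hw : w = v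
  · subst hw
    simp [he]
  · have : flipAt w p v = p v := flipAt_apply_of_ne p (Ne.symm hw)
    cases hpv : p v <;> simp [he, this, hpv]

lemma card_filter_flipAt_mem_le (S : Finset (α → Bool)) (v : α) (b : Bool) :
    #{p ∈ S | flipAt v p ∈ S} ≤ 2 * #{p ∈ S | p v = b} := by
  set M := {p ∈ S | flipAt v p ∈ S}
  have hM : ∀ p ∈ M, flipAt v p ∈ M := by
    intro p hp
    rw [mem_filter] at hp ⊢
    rw [flipAt_flipAt]
    exact ⟨hp.2, hp.1⟩
  rw [← two_mul_card_filter_apply_eq hM b, filter_filter]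
  gcongr with p
  exact And.right

lemma card_innerEdges_le (S : Finset (α → Bool)) : #(innerEdges S) ≤ edgeBound #S := by
  induction S using Finset.strongInduction with
  | _ S ih =>
  by_cases hS : 1 < #S
  swap
  · suffices innerEdges S = ∅ by simp [this]
    refine eq_empty_of_forall_notMem fun e he => hS ?_
    rw [mem_innerEdges] at he
    exact one_lt_card.2 ⟨_, he.2, _, he.1, flipAt_ne _ _⟩
  obtain ⟨p, hp, q, hq, hpq⟩ := one_lt_card.1 hS
  obtain ⟨v, hv⟩ := Function.ne_iff.1 hpq
  have hsplit : #{p ∈ S | p v = false} + #{p ∈ S | p v = true} = #S := by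
    simpa using card_filter_add_card_filter_not (s := S) (fun p => p v = false)
  have hproper : ∀ b, {p ∈ S | p v = b} ⊂ S := fun b => filter_ssubset.2 <| by
    by_cases h : p v = b
    · exact ⟨q, hq, fun h' => hv (h.trans h'.symm)⟩
    · exact ⟨p, hp, h⟩
  calc #(innerEdges S)
      ≤ #{p ∈ S | flipAt v p ∈ S} + #(innerEdges {p ∈ S | p v = false})
          + #(innerEdges {p ∈ S | p v = true}) := by
        refine (card_le_card (innerEdges_subset S v)).trans ((card_union_le _ _).trans ?_)
        gcongr
        refine (card_union_le _ _).trans ?_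
        rw [card_image_of_injective _ (Prod.mk_left_injective v)]
    _ ≤ 2 * min #{p ∈ S | p v = false} #{p ∈ S | p v = true}
          + edgeBound #{p ∈ S | p v = false} + edgeBound #{p ∈ S | p v = true} := by
        gcongr
        · rw [← min_mul_mul_left]
          exact le_min (card_filter_flipAt_mem_le S v false) (card_filter_flipAt_mem_le S v true)
        · exact ih _ (hproper false)
        · exact ih _ (hproper true)
    _ ≤ edgeBound #S := by
        rw [← hsplit]
        linarith [edgeBound_add #{p ∈ S | p v = false} #{p ∈ S | p v = true}]

def FlipConnected (S : Finset (α → Bool)) : Prop :=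
  ∀ T ⊆ S, T.Nonempty → (∀ p ∈ T, ∀ v, flipAt v p ∈ S → flipAt v p ∈ T) → T = S

lemma flipConnected_of_forall_lt_card_innerEdges (S : Finset (α → Bool))
    (h : ∀ a b, 0 < a → 0 < b → a + b = #S → edgeBound a + edgeBound b < #(innerEdges S)) :
    FlipConnected S := by
  intro T hTS hT hclosed
  by_contra hne
  have hsub : innerEdges S ⊆ innerEdges T ∪ innerEdges (S \ T) := by
    rintro ⟨p, v⟩ he
    rw [mem_innerEdges] at he
    by_cases hp : p ∈ T
    · exact mem_union_left _ (mem_innerEdges.2 ⟨hp, hclosed p hp v he.2⟩)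
    · refine mem_union_right _ (mem_innerEdges.2
        ⟨mem_sdiff.2 ⟨he.1, hp⟩, mem_sdiff.2 ⟨he.2, fun hq => hp ?_⟩⟩)
      simpa using hclosed _ hq v (by simpa using he.1)
  have hST : (S \ T).Nonempty := sdiff_nonempty.2 fun hST => hne (hTS.antisymm hST)
  have hlt := h #T #(S \ T) hT.card_pos hST.card_pos
    (by rw [add_comm, card_sdiff_add_card_eq_card hTS])
  have := (card_le_card hsub).trans (card_union_le _ _)
  linarith [card_innerEdges_le T, card_innerEdges_le (S \ T)]

lemma exists_notMem_of_card_ne_two_pow (S : Finset (α → Bool)) (hS : S.Nonempty)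
    (hpow : ∀ k, #S ≠ 2 ^ k) : ∃ w ∉ S, ∀ v b, (∀ p ∈ S, p v = b) → w v = b := by
  obtain ⟨p₀, hp₀⟩ := hS
  set U := univ.filter fun v => ∃ p ∈ S, p v ≠ p₀ v
  set restrict : (α → Bool) → (U → Bool) := fun p u => p u
  have hinj : Set.InjOn restrict S := by
    intro p hp q hq h
    funext v
    by_cases hv : v ∈ U
    · exact congrFun h ⟨v, hv⟩
    · simp only [U, mem_filter, mem_univ, true_and, not_exists, not_and, not_not] at hv
      rw [hv p hp, hv q hq]
  have hlt : #(S.image restrict) < #(univ : Finset (U → Bool)) := by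
    refine (card_le_univ _).lt_of_ne ?_
    rw [card_image_of_injOn hinj, Fintype.card_fun, Fintype.card_bool, Fintype.card_coe]
    exact hpow _
  obtain ⟨β, -, hβ⟩ := exists_mem_notMem_of_card_lt_card hlt
  refine ⟨fun v => if h : v ∈ U then β ⟨v, h⟩ else p₀ v, fun hw => hβ ?_,
    fun v b hb => ?_⟩
  · refine mem_image.2 ⟨_, hw, funext fun u => ?_⟩
    simp [restrict, u.2]
  · have hv : v ∉ U := by simpa [U, hb p₀ hp₀] using hb
    simp [hv, hb p₀ hp₀]

end Hypercube

section Assignments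

variable {V : Finset ℕ}

def LitTrue (t : V → Bool) (x : ℤ) : Prop :=
  ∃ h : x.natAbs ∈ V, t ⟨x.natAbs, h⟩ = decide (0 < x)

instance (t : V → Bool) (x : ℤ) : Decidable (LitTrue t x) :=
  inferInstanceAs (Decidable (∃ _, _))

def Falsifies (t : V → Bool) (C : Finset ℤ) : Prop := ∀ x ∈ C, ¬ LitTrue t x

instance (t : V → Bool) (C : Finset ℤ) : Decidable (Falsifies t C) :=
  inferInstanceAs (Decidable (∀ _ ∈ C, _))

variable {t : V → Bool} {x : ℤ} {C D : Finset ℤ}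

lemma IsClause.ne_zero (hC : IsClause C) (hx : x ∈ C) : x ≠ 0 :=
  fun h => hC.1 (h ▸ hx)

lemma litTrue_neg (hx : x ≠ 0) (hV : x.natAbs ∈ V) : LitTrue t (-x) ↔ ¬ LitTrue t x := by
  simp only [LitTrue, Int.natAbs_neg, hV, exists_true_left]
  rcases hx.lt_or_gt with h | h
  · simp [h, show ¬ 0 < x by omega]
  · simp [h, h.not_gt]

lemma litTrue_flipAt_of_ne {v : V} (hx : x.natAbs ≠ v) : LitTrue (flipAt v t) x ↔ LitTrue t x :=
  exists_congr fun _ => by rw [flipAt_apply_of_ne _ fun h => hx (congrArg Subtype.val h)]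

lemma litTrue_flipAt_self {v : V} (hx : x.natAbs = v) :
    LitTrue (flipAt v t) x ↔ ¬ LitTrue t x := by
  obtain ⟨v, hv⟩ := v
  subst hx
  simp [LitTrue, hv, Bool.eq_not_iff]

lemma not_falsifies_iff : ¬ Falsifies t C ↔ ∃ x ∈ C, LitTrue t x := by
  simp [Falsifies]

lemma Falsifies.not_of_neg_mem (hC : Falsifies t C) (hx : x ∈ C) (hnx : -x ∈ D) (hx0 : x ≠ 0)
    (hV : x.natAbs ∈ V) : ¬ Falsifies t D :=
  fun hD => hD _ hnx ((litTrue_neg hx0 hV).2 (hC x hx))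

def toClause (t : V → Bool) : Finset ℤ :=
  (V.image (fun v : ℕ => (v : ℤ)) ∪ V.image (fun v : ℕ => -(v : ℤ))).filter
    fun x => x ≠ 0 ∧ LitTrue t x

lemma mem_toClause : x ∈ toClause t ↔ x ≠ 0 ∧ LitTrue t x := by
  refine ⟨fun h => (mem_filter.1 h).2, fun h => mem_filter.2 ⟨?_, h⟩⟩
  obtain ⟨hV, -⟩ := h.2
  rcases Int.natAbs_eq x with hx | hx
  · exact mem_union_left _ (mem_image.2 ⟨_, hV, hx.symm⟩)
  · exact mem_union_right _ (mem_image.2 ⟨_, hV, hx.symm⟩)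

lemma isClause_toClause (t : V → Bool) : IsClause (toClause t) := by
  refine ⟨fun h => (mem_toClause.1 h).1 rfl, fun x hx hnx => ?_⟩
  obtain ⟨hx0, hxt⟩ := mem_toClause.1 hx
  exact (litTrue_neg hx0 hxt.1).1 (mem_toClause.1 hnx).2 hxt

def ofClause (A : Finset ℤ) : V → Bool := fun v => decide ((v : ℤ) ∈ A)

lemma litTrue_ofClause {A : Finset ℤ} (hA : IsClause A) (hx : x ∈ A) (hV : x.natAbs ∈ V) :
    LitTrue (ofClause A : V → Bool) x := by
  refine ⟨hV, ?_⟩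
  rcases (hA.ne_zero hx).lt_or_gt with h | h
  · simp [ofClause, abs_of_neg h, hA.2 x hx, h.not_gt]
  · simp [ofClause, abs_of_pos h, hx, h]

def falsifyingPoint (C : Finset ℤ) : V → Bool := fun v => decide (-(v : ℤ) ∈ C)

lemma falsifies_falsifyingPoint (hC : IsClause C) :
    Falsifies (falsifyingPoint C : V → Bool) C := by
  rintro x hx ⟨hV, hxt⟩
  rcases (hC.ne_zero hx).lt_or_gt with h | h
  · simp [falsifyingPoint, abs_of_neg h, hx, h.not_gt] at hxt
  · simp [falsifyingPoint, abs_of_pos h, hC.2 x hx, h] at hxt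

lemma Falsifies.eq_falsifyingPoint (h : Falsifies t C) (hC : IsClause C) (hCV : clauseVar C = V) :
    t = falsifyingPoint C := by
  funext v
  obtain ⟨x, hx, hxv⟩ := mem_image.1 (hCV ▸ v.2 : (v : ℕ) ∈ clauseVar C)
  have hxt : ¬ t ⟨x.natAbs, _⟩ = decide (0 < x) := fun e => h x hx ⟨hxv ▸ v.2, e⟩
  rw [show (⟨x.natAbs, _⟩ : V) = v from Subtype.ext hxv] at hxt
  rcases (hC.ne_zero hx).lt_or_gt with hlt | hlt
  · simpa [falsifyingPoint, ← hxv, abs_of_neg hlt, hx, hlt.not_gt] using hxt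
  · simpa [falsifyingPoint, ← hxv, abs_of_pos hlt, hC.2 x hx, hlt] using hxt

lemma falsifyingPoint_subset (hC : IsClause C) (hD : IsClause D) (hCV : clauseVar C ⊆ V)
    (hDV : clauseVar D = V) (h : (falsifyingPoint C : V → Bool) = falsifyingPoint D) :
    C ⊆ D := by
  intro x hx
  have hV : x.natAbs ∈ V := hCV (mem_image_of_mem _ hx)
  obtain ⟨y, hy, hyx⟩ := mem_image.1 (hDV ▸ hV : x.natAbs ∈ clauseVar D)
  rcases Int.natAbs_eq_natAbs_iff.1 hyx with rfl | rfl
  · exact hy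
  · exact absurd (falsifies_falsifyingPoint hD)
      (h ▸ (falsifies_falsifyingPoint hC).not_of_neg_mem hx hy (hC.ne_zero hx) hV)

end Assignments

section ClauseSets

variable {V : Finset ℕ} {F G : Finset (Finset ℤ)} {C : Finset ℤ}

lemma clauseVar_subset_var (hC : C ∈ F) : clauseVar C ⊆ var F :=
  subset_biUnion_of_mem clauseVar hC

lemma natAbs_mem_var {x : ℤ} (hC : C ∈ F) (hx : x ∈ C) : x.natAbs ∈ var F :=
  clauseVar_subset_var hC (mem_image_of_mem _ hx)

lemma satisfiable_of_forall_not_falsifies (hG : IsClauseSet G) (t : V → Bool)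
    (h : ∀ D ∈ G, ¬ Falsifies t D) : Satisfiable G := by
  refine ⟨toClause t, isClause_toClause t, fun D hD => ?_⟩
  obtain ⟨x, hx, hxt⟩ := not_falsifies_iff.1 (h D hD)
  exact ⟨x, mem_inter.2 ⟨mem_toClause.2 ⟨(hG D hD).ne_zero hx, hxt⟩, hx⟩⟩

lemma not_falsifies_ofClause {A D : Finset ℤ} (hA : IsClause A) (hD : D ∈ F)
    (hAD : (A ∩ D).Nonempty) : ¬ Falsifies (ofClause A : var F → Bool) D := by
  obtain ⟨x, hx⟩ := hAD
  rw [mem_inter] at hx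
  exact fun htD => htD x hx.2 (litTrue_ofClause hA hx.1 (natAbs_mem_var hD hx.2))

lemma not_satisfiable_iff (hF : IsClauseSet F) :
    ¬ Satisfiable F ↔ ∀ t : var F → Bool, ∃ D ∈ F, Falsifies t D := by
  refine ⟨fun hU t => ?_, fun h ⟨A, hA, hAF⟩ => ?_⟩
  · by_contra! ht
    exact hU (satisfiable_of_forall_not_falsifies hF t ht)
  · obtain ⟨D, hD, htD⟩ := h (ofClause A)
    exact not_falsifies_ofClause hA hD (hAF D hD) htD

def IsPrivateFalsifier (F : Finset (Finset ℤ)) (t : var F → Bool) (C : Finset ℤ) : Prop :=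
  Falsifies t C ∧ ∀ D ∈ F, D ≠ C → ¬ Falsifies t D

instance (t : var F → Bool) : Decidable (IsPrivateFalsifier F t C) :=
  inferInstanceAs (Decidable (_ ∧ _))

lemma MinUnsat.exists_isPrivateFalsifier (hMU : MinUnsat F) (hF : IsClauseSet F) (hC : C ∈ F) :
    ∃ t, IsPrivateFalsifier F t C := by
  obtain ⟨A, hA, hAF⟩ := hMU.2 _ (erase_ssubset hC)
  have hpriv : ∀ D ∈ F, D ≠ C → ¬ Falsifies (ofClause A : var F → Bool) D :=
    fun D hD hDC => not_falsifies_ofClause hA hD (hAF D (mem_erase.2 ⟨hDC, hD⟩))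
  obtain ⟨D, hD, htD⟩ := (not_satisfiable_iff hF).1 hMU.1 (ofClause A)
  obtain rfl : D = C := by_contra fun hDC => hpriv D hD hDC htD
  exact ⟨_, htD, hpriv⟩

lemma minUnsat_of_forall_exists_isPrivateFalsifier (hF : IsClauseSet F) (hU : ¬ Satisfiable F)
    (h : ∀ C ∈ F, ∃ t, IsPrivateFalsifier F t C) : MinUnsat F := by
  refine ⟨hU, fun G hGF => ?_⟩
  obtain ⟨C, hCF, hCG⟩ := exists_of_ssubset hGF
  obtain ⟨t, -, ht⟩ := h C hCF
  exact satisfiable_of_forall_not_falsifies (fun D hD => hF D (hGF.subset hD)) t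
    fun D hD => ht D (hGF.subset hD) (ne_of_mem_of_not_mem hD hCG)

lemma Hitting.isPrivateFalsifier_falsifyingPoint (hH : Hitting F) (hF : IsClauseSet F)
    (hC : C ∈ F) : IsPrivateFalsifier F (falsifyingPoint C) C := by
  refine ⟨falsifies_falsifyingPoint (hF C hC), fun D hD hDC => ?_⟩
  obtain ⟨x, hx, hnx⟩ := hH C hC D hD (Ne.symm hDC)
  exact (falsifies_falsifyingPoint (hF C hC)).not_of_neg_mem hx hnx ((hF C hC).ne_zero hx)
    (natAbs_mem_var hC hx)

end ClauseSets

section Counting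

variable {V : Finset ℕ} {S : Finset (V → Bool)} {N : Finset (Finset ℤ)} {t : V → Bool}
  {x : ℤ} {D : Finset ℤ}

def flipsInto (S : Finset (V → Bool)) (D : Finset ℤ) : Finset ((V → Bool) × V) :=
  (S ×ˢ univ).filter fun e => Falsifies (flipAt e.2 e.1) D

lemma natAbs_eq_of_falsifies_flipAt {v : V} (hx : x ∈ D) (hxt : LitTrue t x)
    (h : Falsifies (flipAt v t) D) : x.natAbs = v :=
  by_contra fun hne => h x hx ((litTrue_flipAt_of_ne hne).2 hxt)

lemma injOn_fst_flipsInto (hSD : ∀ p ∈ S, ¬ Falsifies p D) :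
    Set.InjOn Prod.fst (flipsInto S D : Set ((V → Bool) × V)) := by
  rintro ⟨p, v⟩ he ⟨q, w⟩ he' (rfl : p = q)
  simp only [flipsInto, coe_filter, mem_product, mem_univ, and_true] at he he'
  obtain ⟨x, hx, hxt⟩ := not_falsifies_iff.1 (hSD p he.1)
  rw [Prod.mk.injEq, Subtype.ext_iff, ← natAbs_eq_of_falsifies_flipAt hx hxt he.2,
    ← natAbs_eq_of_falsifies_flipAt hx hxt he'.2]
  exact ⟨rfl, rfl⟩

lemma card_flipsInto_le (hSD : ∀ p ∈ S, ¬ Falsifies p D) : #(flipsInto S D) ≤ #S :=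
  card_le_card_of_injOn Prod.fst (fun _ he => (mem_product.1 (mem_filter.1 he).1).1)
    (injOn_fst_flipsInto hSD)

lemma exists_falsifies_flipAt_of_card_le (hSD : ∀ p ∈ S, ¬ Falsifies p D)
    (hcard : #S ≤ #(flipsInto S D)) {p : V → Bool} (hp : p ∈ S) :
    ∃ v, Falsifies (flipAt v p) D := by
  obtain ⟨e, he, rfl⟩ := surj_on_of_inj_on_of_card_le (fun e _ => e.1)
    (fun e he => (mem_product.1 (mem_filter.1 he).1).1)
    (fun e₁ e₂ he₁ he₂ h => injOn_fst_flipsInto hSD he₁ he₂ h) hcard p hp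
  exact ⟨e.2, (mem_filter.1 he).2⟩

lemma litTrue_flipAt_of_unique (hD : IsClause D) (hx : x ∈ D) (hxt : LitTrue t x)
    (huniq : ∀ y ∈ D, LitTrue t y → y = x) {v : V} (hnf : ¬ Falsifies (flipAt v t) D) :
    LitTrue (flipAt v t) x := by
  by_cases hv : x.natAbs = v
  · refine absurd (fun y hy hyt => ?_) hnf
    by_cases hyv : y.natAbs = v
    · rcases Int.natAbs_eq_natAbs_iff.1 (hyv.trans hv.symm) with rfl | rfl
      · exact (litTrue_flipAt_self hv).1 hyt hxt
      · exact hD.2 x hx hy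
    · exact hyv (huniq y hy ((litTrue_flipAt_of_ne hyv).1 hyt) ▸ hv)
  · exact (litTrue_flipAt_of_ne hv).2 hxt

/-- `D` has exactly one true literal at each point of `S`, and it cannot change along an edge
inside `S`. -/
lemma exists_forall_litTrue (hD : IsClause D) (hSD : ∀ p ∈ S, ¬ Falsifies p D)
    (hflip : ∀ p ∈ S, ∃ v, Falsifies (flipAt v p) D) (hS : FlipConnected S)
    (hne : S.Nonempty) :
    ∃ x ∈ D, ∀ p ∈ S, LitTrue p x := by
  obtain ⟨p₀, hp₀⟩ := hne
  obtain ⟨x, hx, hxt⟩ := not_falsifies_iff.1 (hSD p₀ hp₀)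
  have huniq : ∀ p ∈ S, LitTrue p x → ∀ y ∈ D, LitTrue p y → y = x := by
    intro p hp hpx y hy hpy
    obtain ⟨v, hv⟩ := hflip p hp
    rcases Int.natAbs_eq_natAbs_iff.1 ((natAbs_eq_of_falsifies_flipAt hy hpy hv).trans
      (natAbs_eq_of_falsifies_flipAt hx hpx hv).symm) with rfl | rfl
    · rfl
    · exact absurd hpx ((litTrue_neg (hD.ne_zero hx) hpx.1).1 hpy)
  have hT := hS {p ∈ S | LitTrue p x} (filter_subset _ _)
    ⟨p₀, mem_filter.2 ⟨hp₀, hxt⟩⟩ fun p hp v hpv => by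
      rw [mem_filter] at hp ⊢
      exact ⟨hpv, litTrue_flipAt_of_unique hD hx hp.2 (huniq p hp.1 hp.2) (hSD _ hpv)⟩
  refine ⟨x, hx, fun p hp => ?_⟩
  rw [← hT] at hp
  exact (mem_filter.1 hp).2

lemma card_mul_card_le (hcover : ∀ t ∉ S, ∃ D ∈ N, Falsifies t D) :
    #S * #V ≤ #(innerEdges S) + ∑ D ∈ N, #(flipsInto S D) := by
  have hsub : S ×ˢ univ ⊆ innerEdges S ∪ N.biUnion (flipsInto S) := by
    rintro ⟨p, v⟩ he
    by_cases hv : flipAt v p ∈ S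
    · exact mem_union_left _ (mem_innerEdges.2 ⟨(mem_product.1 he).1, hv⟩)
    · obtain ⟨D, hD, hfD⟩ := hcover _ hv
      exact mem_union_right _ (mem_biUnion.2 ⟨D, hD, mem_filter.2 ⟨he, hfD⟩⟩)
  calc #S * #V = #(S ×ˢ (univ : Finset V)) := by rw [card_product, card_univ, Fintype.card_coe]
    _ ≤ _ := (card_le_card hsub).trans (card_union_le _ _)
    _ ≤ _ := Nat.add_le_add_left card_biUnion_le _

lemma card_le_ten (hSN : ∀ p ∈ S, ∀ D ∈ N, ¬ Falsifies p D)
    (hcover : ∀ t ∉ S, ∃ D ∈ N, Falsifies t D) (hcard : #N + #S = #V + 7) : #S ≤ 10 := by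
  by_contra! h
  have hcount := card_mul_card_le hcover
  have hsum : ∑ D ∈ N, #(flipsInto S D) ≤ #N * #S := by
    simpa using sum_le_sum fun D hD => card_flipsInto_le fun p hp => hSN p hp D hD
  obtain ⟨s, hs⟩ : ∃ s, #S = s + 11 := ⟨#S - 11, by omega⟩
  have hedges := card_innerEdges_le S
  rw [hs] at hedges
  change #(innerEdges S) ≤ s * s + 15 * s + 42 at hedges
  rw [hs] at hcount hsum hcard
  nlinarith

lemma card_ne_ten (hN : ∀ D ∈ N, IsClause D) (hSN : ∀ p ∈ S, ∀ D ∈ N, ¬ Falsifies p D)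
    (hcover : ∀ t ∉ S, ∃ D ∈ N, Falsifies t D) (hcard : #N + #S = #V + 7) : #S ≠ 10 := by
  intro h10
  have hle : ∀ D ∈ N, #(flipsInto S D) ≤ #S := fun D hD =>
    card_flipsInto_le fun p hp => hSN p hp D hD
  have hcount := card_mul_card_le hcover
  have hedges := card_innerEdges_le S
  rw [h10] at hedges
  change #(innerEdges S) ≤ 30 at hedges
  have hsum_le := sum_le_sum hle
  rw [sum_const, smul_eq_mul] at hsum_le
  rw [h10] at hcount hsum_le hcard
  -- `10 * #V ≤ #(innerEdges S) + ∑ ≤ 30 + 10 * (#V - 3)` is tight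
  have h30 : 30 ≤ #(innerEdges S) := by omega
  have hsum : ∑ D ∈ N, #(flipsInto S D) = ∑ D ∈ N, #S := by
    rw [sum_const, smul_eq_mul, h10]
    omega
  have hconn : FlipConnected S := flipConnected_of_forall_lt_card_innerEdges S
    fun a b ha hb hab => by
      have key : ∀ a < 10, ∀ b < 10, a + b = 10 → edgeBound a + edgeBound b ≤ 26 := by
        decide
      have := key a (by omega) b (by omega) (by omega)
      omega
  have hne : S.Nonempty := card_pos.1 (by omega)
  have hcommon : ∀ D ∈ N, ∃ x ∈ D, ∀ p ∈ S, LitTrue p x := fun D hD =>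
    exists_forall_litTrue (hN D hD) (fun p hp => hSN p hp D hD)
      (fun p hp => exists_falsifies_flipAt_of_card_le (fun p hp => hSN p hp D hD)
        ((sum_eq_sum_iff_of_le hle).1 hsum D hD).ge hp) hconn hne
  have hpow : ∀ k, #S ≠ 2 ^ k := fun k hk => by
    have := Nat.prime_five.dvd_of_dvd_pow (show 5 ∣ 2 ^ k by rw [← hk, h10]; norm_num)
    norm_num at this
  obtain ⟨w, hwS, hw⟩ := exists_notMem_of_card_ne_two_pow S hne hpow
  obtain ⟨D, hD, hwD⟩ := hcover w hwS
  obtain ⟨x, hx, hxS⟩ := hcommon D hD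
  obtain ⟨p₀, hp₀⟩ := hne
  obtain ⟨hV, -⟩ := hxS p₀ hp₀
  exact hwD x hx ⟨hV, hw _ _ fun p hp => (hxS p hp).2⟩

lemma card_le_nine (hN : ∀ D ∈ N, IsClause D) (hSN : ∀ p ∈ S, ∀ D ∈ N, ¬ Falsifies p D)
    (hcover : ∀ t ∉ S, ∃ D ∈ N, Falsifies t D) (hcard : #N + #S = #V + 7) : #S ≤ 9 := by
  have := card_le_ten hSN hcover hcard
  have := card_ne_ten hN hSN hcover hcard
  omega

end Counting

section FullClauses

variable {V : Finset ℕ} {F : Finset (Finset ℤ)} {C : Finset ℤ}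

theorem nfc_le_nine_of_forall_exists_isPrivateFalsifier (hF : IsClauseSet F)
    (hU : ¬ Satisfiable F) (hpriv : ∀ C ∈ F, ∃ t, IsPrivateFalsifier F t C)
    (hδ : deficiency F = 7) : nfc F ≤ 9 := by
  set S := {C ∈ F | clauseVar C = var F}.image (falsifyingPoint (V := var F))
  set N := {D ∈ F | clauseVar D ≠ var F}
  have hS : #S = nfc F := card_image_of_injOn fun C hC D hD h => by
    rw [mem_coe, mem_filter] at hC hD
    exact (falsifyingPoint_subset (hF C hC.1) (hF D hD.1) hC.2.le hD.2 h).antisymm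
      (falsifyingPoint_subset (hF D hD.1) (hF C hC.1) hD.2.le hC.2 h.symm)
  have hSN : ∀ p ∈ S, ∀ D ∈ N, ¬ Falsifies p D := by
    simp only [S, N, mem_image, mem_filter]
    rintro _ ⟨C, ⟨hC, hCV⟩, rfl⟩ D ⟨hD, hDV⟩
    obtain ⟨t, htC, ht⟩ := hpriv C hC
    rw [← htC.eq_falsifyingPoint (hF C hC) hCV]
    exact ht D hD (by rintro rfl; exact hDV hCV)
  have hcover : ∀ t ∉ S, ∃ D ∈ N, Falsifies t D := by
    intro t ht
    obtain ⟨D, hD, htD⟩ := (not_satisfiable_iff hF).1 hU t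
    refine ⟨D, mem_filter.2 ⟨hD, fun hDV => ht ?_⟩, htD⟩
    exact mem_image.2
      ⟨D, mem_filter.2 ⟨hD, hDV⟩, (htD.eq_falsifyingPoint (hF D hD) hDV).symm⟩
  have hcard : #N + #S = #(var F) + 7 := by
    have := card_filter_add_card_filter_not (s := F) (fun C => clauseVar C = var F)
    unfold deficiency numVar at hδ
    rw [hS]
    unfold nfc
    simp only [N, ne_eq]
    omega
  exact hS ▸ card_le_nine (fun D hD => hF D (mem_filter.1 hD).1) hSN hcover hcard

lemma card_falsifiers_eq_one (hC : IsClause C) (hCV : clauseVar C = V) :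
    #{t : V → Bool | Falsifies t C} = 1 :=
  card_eq_one.2 ⟨falsifyingPoint C, by
    ext t
    simpa using
      ⟨fun h => h.eq_falsifyingPoint hC hCV, fun h => h ▸ falsifies_falsifyingPoint hC⟩⟩

lemma even_card_falsifiers {v : V} (hv : (v : ℕ) ∉ clauseVar C) :
    Even #{t : V → Bool | Falsifies t C} := by
  set Z : Finset (V → Bool) := {t | Falsifies t C}
  have hflip : ∀ t ∈ Z, flipAt v t ∈ Z := by
    simp only [Z, mem_filter, mem_univ, true_and]
    intro t ht x hx
    rw [litTrue_flipAt_of_ne fun h => hv (h ▸ mem_image_of_mem _ hx)]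
    exact ht x hx
  exact ⟨_, (two_mul_card_filter_apply_eq hflip true).symm.trans (two_mul _)⟩

lemma Hitting.sum_card_falsifiers (hH : Hitting F) (hF : IsClauseSet F) (hU : ¬ Satisfiable F) :
    ∑ C ∈ F, #{t : var F → Bool | Falsifies t C} = 2 ^ numVar F := by
  rw [← card_biUnion]
  · rw [show F.biUnion (fun C => {t : var F → Bool | Falsifies t C}) = univ from
      eq_univ_of_forall fun t => by simpa using (not_satisfiable_iff hF).1 hU t]
    rw [card_univ, Fintype.card_fun, Fintype.card_bool, Fintype.card_coe, numVar]
  · intro C hC D hD hCD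
    refine disjoint_filter.2 fun t _ htC htD => ?_
    obtain ⟨x, hx, hnx⟩ := hH C hC D hD hCD
    exact htC.not_of_neg_mem hx hnx ((hF C hC).ne_zero hx) (natAbs_mem_var hC hx) htD

theorem Hitting.even_nfc (hH : Hitting F) (hF : IsClauseSet F) (hU : ¬ Satisfiable F)
    (hV : (var F).Nonempty) : Even (nfc F) := by
  have hsum := hH.sum_card_falsifiers hF hU
  rw [← sum_filter_add_sum_filter_not F fun C => clauseVar C = var F] at hsum
  have hfull :
      ∑ C ∈ F with clauseVar C = var F, #{t : var F → Bool | Falsifies t C} = nfc F := by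
    rw [sum_congr rfl fun C hC => card_falsifiers_eq_one (hF C (mem_filter.1 hC).1)
      (mem_filter.1 hC).2, sum_const, smul_eq_mul, mul_one, nfc]
  have hnonfull :
      Even (∑ C ∈ F with ¬ clauseVar C = var F, #{t : var F → Bool | Falsifies t C}) :=
    even_sum _ fun C hC => by
      obtain ⟨v, hvF, hvC⟩ := exists_of_ssubset <|
        (clauseVar_subset_var (mem_filter.1 hC).1).ssubset_of_ne (mem_filter.1 hC).2
      exact even_card_falsifiers (v := ⟨v, hvF⟩) hvC
  have hpow : Even (2 ^ numVar F) := Nat.even_pow.2 ⟨even_two, (card_pos.2 hV).ne'⟩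
  rw [← hsum, hfull] at hpow
  exact (Nat.even_add.1 hpow).2 hnonfull

lemma var_nonempty_of_one_lt_deficiency (h : 1 < deficiency F) : (var F).Nonempty := by
  by_contra hV
  rw [not_nonempty_iff_eq_empty] at hV
  have hF : F ⊆ {∅} := fun C hC => mem_singleton.2 <| image_eq_empty.1 <| subset_empty.1 <|
    hV ▸ clauseVar_subset_var hC
  have := card_le_card hF
  unfold deficiency numVar at h
  rw [card_singleton] at this
  rw [hV, card_empty] at h
  omega

theorem MinUnsat.nfc_le_nine (hMU : MinUnsat F) (hF : IsClauseSet F) (hδ : deficiency F = 7) :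
    nfc F ≤ 9 :=
  nfc_le_nine_of_forall_exists_isPrivateFalsifier hF hMU.1
    (fun _ hC => hMU.exists_isPrivateFalsifier hF hC) hδ

theorem Hitting.nfc_le_eight (hH : Hitting F) (hF : IsClauseSet F) (hU : ¬ Satisfiable F)
    (hδ : deficiency F = 7) : nfc F ≤ 8 := by
  have := nfc_le_nine_of_forall_exists_isPrivateFalsifier hF hU
    (fun _ hC => ⟨_, hH.isPrivateFalsifier_falsifyingPoint hF hC⟩) hδ
  obtain ⟨k, hk⟩ := hH.even_nfc hF hU (var_nonempty_of_one_lt_deficiency (by omega))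
  omega

end FullClauses

section Examples

def minUnsatNineFull : Finset (Finset ℤ) :=
  {{1, 2, 3, 4}, {1, 2, 3, -4}, {1, 2, -3, 4}, {1, -2, 3, 4}, {1, -2, 3, -4}, {1, -2, -3, 4},
    {-1, 2, 3, 4}, {-1, 2, 3, -4}, {-1, 2, -3, 4}, {-1, -2}, {-3, -4}}

def hittingEightFull : Finset (Finset ℤ) :=
  {{1, 2, 3, 4}, {1, 2, 3, -4}, {1, 2, -3, 4}, {1, 2, -3, -4},
    {1, -2, 3, 4}, {1, -2, 3, -4}, {1, -2, -3, 4}, {1, -2, -3, -4},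
    {-1, -2}, {-1, 2, -3}, {-1, 2, 3}}

lemma isClauseSet_minUnsatNineFull : IsClauseSet minUnsatNineFull := by
  unfold IsClauseSet IsClause minUnsatNineFull
  decide

lemma minUnsat_minUnsatNineFull : MinUnsat minUnsatNineFull :=
  minUnsat_of_forall_exists_isPrivateFalsifier isClauseSet_minUnsatNineFull
    ((not_satisfiable_iff isClauseSet_minUnsatNineFull).2 (by decide)) (by decide)

lemma deficiency_minUnsatNineFull : deficiency minUnsatNineFull = 7 := by
  decide

lemma nfc_minUnsatNineFull : nfc minUnsatNineFull = 9 := by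
  decide

lemma isClauseSet_hittingEightFull : IsClauseSet hittingEightFull := by
  unfold IsClauseSet IsClause hittingEightFull
  decide

lemma not_satisfiable_hittingEightFull : ¬ Satisfiable hittingEightFull :=
  (not_satisfiable_iff isClauseSet_hittingEightFull).2 (by decide)

lemma hitting_hittingEightFull : Hitting hittingEightFull := by
  unfold Hitting hittingEightFull
  decide

lemma deficiency_hittingEightFull : deficiency hittingEightFull = 7 := by
  decide

lemma nfc_hittingEightFull : nfc hittingEightFull = 8 := by
  decide

end Examples

theorem stmt_18 :
    ((∀ F : Finset (Finset ℤ), IsClauseSet F → MinUnsat F → deficiency F = 7 → nfc F ≤ 9) ∧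
     (∃ F : Finset (Finset ℤ), IsClauseSet F ∧ MinUnsat F ∧ deficiency F = 7 ∧ nfc F = 9)) ∧
    ((∀ F : Finset (Finset ℤ), IsClauseSet F → ¬ Satisfiable F → Hitting F →
        deficiency F = 7 → nfc F ≤ 8) ∧
     (∃ F : Finset (Finset ℤ), IsClauseSet F ∧ ¬ Satisfiable F ∧ Hitting F ∧
        deficiency F = 7 ∧ nfc F = 8)) :=
  ⟨⟨fun _ hF hMU hδ => hMU.nfc_le_nine hF hδ,
      ⟨minUnsatNineFull, isClauseSet_minUnsatNineFull, minUnsat_minUnsatNineFull,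
        deficiency_minUnsatNineFull, nfc_minUnsatNineFull⟩⟩,
    ⟨fun _ hF hU hH hδ => hH.nfc_le_eight hF hU hδ,
      ⟨hittingEightFull, isClauseSet_hittingEightFull, not_satisfiable_hittingEightFull,
        hitting_hittingEightFull, deficiency_hittingEightFull, nfc_hittingEightFull⟩⟩⟩
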